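/- arXiv:1612.06270 — 2 statements merged into one kernel-verified Lean document; each statement's English description precedes it below -/
import Mathlib

section
/- Let S be a semitopological semigroup and X a norm-closed linear subspace of ℓ∞(S) containing the constant functions and invariant under all left and right translations, and suppose X has a left invariant mean. Suppose that S acts on a nonempty weakly compact subset K of a Banach space E so that the action is weakly separately continuous and there exists y ∈ K such that for every weakly continuous complex-valued function f on K, the function s ↦ f(s·y) belongs to X. Then there exists a probability Radon measure μ on K (with the weak topology) such that μ(s⁻¹A) = μ(A) for every Borel subset A of K and every s ∈ S, where s⁻¹A = {x ∈ K : s·x ∈ A}. -/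
open scoped BoundedContinuousFunction

/-- A semitopological semigroup: a semigroup with a topology in which
multiplication is separately continuous. -/
class SemitopoSemigroup (S : Type*) [Semigroup S] [TopologicalSpace S] : Prop where
  cont_left : ∀ t : S, Continuous fun s : S => t * s
  cont_right : ∀ t : S, Continuous fun s : S => s * t

section Ell

variable {S : Type*}

/-- Left translation: `(l_s f)(t) = f (s * t)`. -/
def lTrans [Mul S] (s : S) (f : S → ℂ) : S → ℂ := fun t => f (s * t)

/-- Right translation: `(r_s f)(t) = f (t * s)`. -/
def rTrans [Mul S] (s : S) (f : S → ℂ) : S → ℂ := fun t => f (t * s)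

/-- A bounded complex-valued function, i.e. an element of `ℓ^∞(S)`. -/
def BddFun (f : S → ℂ) : Prop := ∃ C : ℝ, ∀ t, ‖f t‖ ≤ C

/-- The supremum norm on `ℓ^∞(S)`. -/
noncomputable def supNorm (f : S → ℂ) : ℝ := ⨆ t, ‖f t‖

/-- `X` is a norm-closed linear subspace of `ℓ^∞(S)` containing the constants and
invariant under all left and right translations. -/
structure IsTransInvSubspace [Semigroup S] (X : Set (S → ℂ)) : Prop where
  bdd : ∀ f ∈ X, BddFun f
  add_mem : ∀ f ∈ X, ∀ g ∈ X, f + g ∈ X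
  smul_mem : ∀ (c : ℂ), ∀ f ∈ X, c • f ∈ X
  const_mem : ∀ c : ℂ, (fun _ : S => c) ∈ X
  normClosed : ∀ f : S → ℂ, BddFun f →
    (∀ ε > 0, ∃ g ∈ X, ∀ t, ‖f t - g t‖ ≤ ε) → f ∈ X
  lTrans_mem : ∀ (s : S), ∀ f ∈ X, lTrans s f ∈ X
  rTrans_mem : ∀ (s : S), ∀ f ∈ X, rTrans s f ∈ X

/-- `m` is a left invariant mean on `X`: a linear functional with `‖m‖ = m 1 = 1`
which is invariant under left translations. -/
structure IsLIM [Semigroup S] (X : Set (S → ℂ)) (m : (S → ℂ) → ℂ) : Prop where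
  add : ∀ f ∈ X, ∀ g ∈ X, m (f + g) = m f + m g
  smul : ∀ (c : ℂ), ∀ f ∈ X, m (c • f) = c * m f
  norm_le : ∀ f ∈ X, ‖m f‖ ≤ supNorm f
  map_one : m (fun _ : S => (1 : ℂ)) = 1
  left_inv : ∀ (s : S), ∀ f ∈ X, m (lTrans s f) = m f

/-- `X` has a left invariant mean. -/
def HasLIM [Semigroup S] (X : Set (S → ℂ)) : Prop := ∃ m, IsLIM X m

end Ell

/-- The weak topology on a normed space `E` over `𝕜`. -/
noncomputable def weakTop (𝕜 E : Type*) [NontriviallyNormedField 𝕜] [NormedAddCommGroup E]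
    [NormedSpace 𝕜 E] : TopologicalSpace E :=
  ⨅ φ : E →L[𝕜] 𝕜, TopologicalSpace.induced φ inferInstance

section Semitopo

variable {S : Type*} [Semigroup S] [TopologicalSpace S] [SemitopoSemigroup S]

/-- Left translation as a map on `C(S)`, the bounded continuous functions. -/
noncomputable def lTransB (s : S) (F : S →ᵇ ℂ) : S →ᵇ ℂ :=
  F.compContinuous ⟨fun t => s * t, SemitopoSemigroup.cont_left s⟩

/-- Right translation as a map on `C(S)`, the bounded continuous functions. -/
noncomputable def rTransB (s : S) (F : S →ᵇ ℂ) : S →ᵇ ℂ :=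
  F.compContinuous ⟨fun t => t * s, SemitopoSemigroup.cont_right s⟩

/-- `F ∈ C(S)` is weakly almost periodic: its left orbit is relatively compact in
the weak topology of `C(S)`. -/
def IsWAPb (F : S →ᵇ ℂ) : Prop :=
  @IsCompact _ (weakTop ℂ (S →ᵇ ℂ))
    (@closure _ (weakTop ℂ (S →ᵇ ℂ)) (Set.range fun s => lTransB s F))

/-- `F ∈ C(S)` is almost periodic: its left orbit is relatively compact in
the norm topology of `C(S)`. -/
def IsAPb (F : S →ᵇ ℂ) : Prop :=
  IsCompact (closure (Set.range fun s => lTransB s F))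

/-- `F ∈ C(S)` is left uniformly continuous: `s ↦ l_s F` is norm continuous. -/
def IsLUCb (F : S →ᵇ ℂ) : Prop := Continuous fun s => lTransB s F

/-- `WAP(S)` as a subset of `ℓ^∞(S)`. -/
def WAPset (S : Type*) [Semigroup S] [TopologicalSpace S] [SemitopoSemigroup S] :
    Set (S → ℂ) := {f | ∃ F : S →ᵇ ℂ, ⇑F = f ∧ IsWAPb F}

/-- `AP(S)` as a subset of `ℓ^∞(S)`. -/
def APset (S : Type*) [Semigroup S] [TopologicalSpace S] [SemitopoSemigroup S] :
    Set (S → ℂ) := {f | ∃ F : S →ᵇ ℂ, ⇑F = f ∧ IsAPb F}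

/-- `LUC(S)` as a subset of `ℓ^∞(S)`. -/
def LUCset (S : Type*) [Semigroup S] [TopologicalSpace S] [SemitopoSemigroup S] :
    Set (S → ℂ) := {f | ∃ F : S →ᵇ ℂ, ⇑F = f ∧ IsLUCb F}

end Semitopo

section Action

variable {S : Type*} {E : Type*} [NormedAddCommGroup E] [NormedSpace ℝ E]

/-- `act` is an action of the semigroup `S` on the set `K`. -/
def IsActionOn [Semigroup S] (act : S → E → E) (K : Set E) : Prop :=
  (∀ s : S, Set.MapsTo (act s) K K) ∧
    ∀ s s' : S, ∀ x ∈ K, act s (act s' x) = act (s * s') x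

/-- The action is nonexpansive on `K`. -/
def NonexpansiveOn (act : S → E → E) (K : Set E) : Prop :=
  ∀ s : S, ∀ x ∈ K, ∀ y ∈ K, ‖act s x - act s y‖ ≤ ‖x - y‖

/-- The action is weakly separately continuous on `K`. -/
def WeaklySepContOn [TopologicalSpace S] (act : S → E → E) (K : Set E) : Prop :=
  (∀ s : S, @ContinuousOn E E (weakTop ℝ E) (weakTop ℝ E) (act s) K) ∧
    (∀ x ∈ K, @Continuous S E _ (weakTop ℝ E) fun s => act s x)

/-- The action is jointly weakly continuous on `K`. -/
def JointlyWeaklyContOn [TopologicalSpace S] (act : S → E → E) (K : Set E) : Prop :=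
  @ContinuousOn (S × E) E (@instTopologicalSpaceProd S E _ (weakTop ℝ E)) (weakTop ℝ E)
    (fun p => act p.1 p.2) (Set.univ ×ˢ K)

/-- The action is weakly equicontinuous on `K`: the family `{x ↦ s • x : s ∈ S}` is
equicontinuous for the weak topology on `K`. -/
def WeaklyEquicontOn (act : S → E → E) (K : Set E) : Prop :=
  ∀ x ∈ K, ∀ W ∈ @nhds E (weakTop ℝ E) 0,
    ∃ U ∈ @nhdsWithin E (weakTop ℝ E) x K, ∀ y ∈ U, ∀ s : S, act s y - act s x ∈ W

/-- The action is weakly quasi-equicontinuous on `K`: every map in the closure of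
`{x ↦ s • x : s ∈ S}` in `K^K` (with `K` carrying the weak topology) is continuous. -/
def WeaklyQuasiEquicontOn (act : S → E → E) (K : Set E) : Prop :=
  ∀ T ∈ @closure (↥K → ↥K)
      (@Pi.topologicalSpace ↥K (fun _ => ↥K)
        (fun _ => TopologicalSpace.induced Subtype.val (weakTop ℝ E)))
      {F : ↥K → ↥K | ∃ s : S, ∀ x : ↥K, (F x : E) = act s x},
    @Continuous ↥K ↥K (TopologicalSpace.induced Subtype.val (weakTop ℝ E))
      (TopologicalSpace.induced Subtype.val (weakTop ℝ E)) T

end Action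

/-- The weak topology of `E` restricted to a subset `K`. -/
noncomputable def weakSubTop (E : Type*) [NormedAddCommGroup E] [NormedSpace ℝ E]
    (K : Set E) : TopologicalSpace ↥K :=
  TopologicalSpace.induced Subtype.val (weakTop ℝ E)

/-!
Transport the left invariant mean to `C(K)` along the orbit of `y`: the functional
`g ↦ Re m (s ↦ g (s • y))` is positive, normalised, and, by left invariance of `m`, invariant
under `g ↦ g ∘ (s • ·)`. Since `K` is compact Hausdorff for the weak topology,
Riesz–Markov–Kakutani gives a regular probability measure `μ` representing it. The pushforward of
`μ` by `s • ·` is again regular and represents the same functional, so it is `μ` by uniqueness in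
Riesz–Markov–Kakutani.
-/

open MeasureTheory CompactlySupported CompactlySupportedContinuousMap
open scoped ComplexOrder

lemma sub_const_eq_add_smul_one {S R : Type*} [Ring R] (f : S → R) (c : R) :
    (fun t => f t - c) = f + (-c) • fun _ => (1 : R) := by
  funext t
  simp [sub_eq_add_neg]

section Mean

variable {S : Type*} [Semigroup S] {X : Set (S → ℂ)} {m : (S → ℂ) → ℂ}

lemma IsTransInvSubspace.sub_const_mem (hX : IsTransInvSubspace X) {f : S → ℂ} (hf : f ∈ X)
    (c : ℂ) : (fun t => f t - c) ∈ X := by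
  rw [sub_const_eq_add_smul_one]
  exact hX.add_mem f hf _ (hX.smul_mem _ _ (hX.const_mem 1))

namespace IsLIM

lemma nonempty (hX : IsTransInvSubspace X) (hm : IsLIM X m) : Nonempty S := by
  by_contra hS
  rw [not_nonempty_iff] at hS
  have h := hm.norm_le _ (hX.const_mem 1)
  norm_num [hm.map_one, supNorm] at h

lemma map_sub_const (hX : IsTransInvSubspace X) (hm : IsLIM X m) {f : S → ℂ} (hf : f ∈ X)
    (c : ℂ) : m (fun t => f t - c) = m f - c := by
  have h1 := hX.const_mem 1
  rw [sub_const_eq_add_smul_one, hm.add f hf _ (hX.smul_mem _ _ h1), hm.smul _ _ h1,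
    hm.map_one, mul_one, ← sub_eq_add_neg]

lemma norm_sub_const_le (hX : IsTransInvSubspace X) (hm : IsLIM X m) {f : S → ℂ} (hf : f ∈ X)
    {c : ℂ} {R : ℝ} (h : ∀ t, ‖f t - c‖ ≤ R) : ‖m f - c‖ ≤ R := by
  have := hm.nonempty hX
  rw [← hm.map_sub_const hX hf c]
  exact (hm.norm_le _ (hX.sub_const_mem hf c)).trans (ciSup_le h)

/-- Values in `[0, C]` lie in the disc of radius `C / 2` about `C / 2`, hence so does the mean. -/
lemma re_nonneg (hX : IsTransInvSubspace X) (hm : IsLIM X m) {f : S → ℂ} (hf : f ∈ X)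
    (hpos : ∀ t, 0 ≤ f t) : 0 ≤ (m f).re := by
  obtain ⟨C, hC⟩ := hX.bdd f hf
  have hdisc : ‖m f - ((C / 2 : ℝ) : ℂ)‖ ≤ C / 2 := by
    refine hm.norm_sub_const_le hX hf fun t => ?_
    rw [← Complex.norm_of_nonneg' (hpos t), ← Complex.ofReal_sub, Complex.norm_real,
      Real.norm_eq_abs, abs_le]
    constructor <;> linarith [hC t, norm_nonneg (f t)]
  have := (Complex.abs_re_le_norm _).trans hdisc
  rw [Complex.sub_re, Complex.ofReal_re, abs_le] at this
  linarith [this.1]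

end IsLIM

end Mean

section OrbitFunctional

variable {S : Type*} [Semigroup S] {X : Set (S → ℂ)} {m : (S → ℂ) → ℂ}
  {Y : Type*} [TopologicalSpace Y]

noncomputable def IsLIM.orbitFunctional (hX : IsTransInvSubspace X) (hm : IsLIM X m) (o : S → Y)
    (ho : ∀ g : C_c(Y, ℝ), (fun s => (g (o s) : ℂ)) ∈ X) : C_c(Y, ℝ) →ₚ[ℝ] ℝ :=
  PositiveLinearMap.mk₀
    { toFun g := (m fun s => (g (o s) : ℂ)).re
      map_add' g h := by
        simp only [CompactlySupportedContinuousMap.coe_add, Pi.add_apply, Complex.ofReal_add]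
        rw [← Complex.add_re, ← hm.add _ (ho g) _ (ho h)]
        rfl
      map_smul' c g := by
        simp only [CompactlySupportedContinuousMap.coe_smul, Pi.smul_apply, smul_eq_mul,
          Complex.ofReal_mul, RingHom.id_apply]
        rw [← Complex.re_ofReal_mul, ← hm.smul _ _ (ho g)]
        rfl }
    fun g hg => hm.re_nonneg hX (ho g) fun s => Complex.zero_le_real.mpr (hg (o s))

lemma IsLIM.orbitFunctional_apply (hX : IsTransInvSubspace X) (hm : IsLIM X m) (o : S → Y)
    (ho : ∀ g : C_c(Y, ℝ), (fun s => (g (o s) : ℂ)) ∈ X) (g : C_c(Y, ℝ)) :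
    hm.orbitFunctional hX o ho g = (m fun s => (g (o s) : ℂ)).re :=
  rfl

lemma IsLIM.orbitFunctional_one [CompactSpace Y] (hX : IsTransInvSubspace X) (hm : IsLIM X m)
    (o : S → Y) (ho : ∀ g : C_c(Y, ℝ), (fun s => (g (o s) : ℂ)) ∈ X) :
    hm.orbitFunctional hX o ho (continuousMapEquiv 1) = 1 := by
  simp [IsLIM.orbitFunctional_apply, continuousMapEquiv, hm.map_one]

lemma IsLIM.orbitFunctional_comp [CompactSpace Y] (hX : IsTransInvSubspace X) (hm : IsLIM X m)
    (o : S → Y) (ho : ∀ g : C_c(Y, ℝ), (fun s => (g (o s) : ℂ)) ∈ X) {T : C(Y, Y)} {s : S}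
    (hTo : ∀ t, T (o t) = o (s * t)) (g : C_c(Y, ℝ)) :
    hm.orbitFunctional hX o ho (continuousMapEquiv ((g : C(Y, ℝ)).comp T)) =
      hm.orbitFunctional hX o ho g := by
  have hcomp : (fun t => (g (T (o t)) : ℂ)) = lTrans s fun t => (g (o t) : ℂ) := by
    funext t
    rw [hTo]
    rfl
  change (m fun t => (g (T (o t)) : ℂ)).re = _
  rw [hcomp, hm.left_inv s _ (ho g)]
  rfl

end OrbitFunctional

section Measure

variable {Y : Type*} [TopologicalSpace Y] [MeasurableSpace Y] [BorelSpace Y]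

lemma RealRMK.rieszMeasure_univ [T2Space Y] [CompactSpace Y] (Λ : C_c(Y, ℝ) →ₚ[ℝ] ℝ) :
    rieszMeasure Λ Set.univ = ENNReal.ofReal (Λ (continuousMapEquiv 1)) := by
  rw [← integral_rieszMeasure Λ]
  simp [continuousMapEquiv]

lemma MeasureTheory.Measure.map_eq_of_integral_comp_eq {Z : Type*} [TopologicalSpace Z]
    [T2Space Z] [LocallyCompactSpace Z] [MeasurableSpace Z] [BorelSpace Z] {μ : Measure Y}
    [μ.InnerRegular] [IsFiniteMeasure μ] {ν : Measure Z} [ν.Regular] {T : Y → Z} (hT : Continuous T)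
    (h : ∀ f : C_c(Z, ℝ), ∫ y, f (T y) ∂μ = ∫ z, f z ∂ν) : μ.map T = ν := by
  have : (μ.map T).InnerRegular := Measure.InnerRegular.map_of_continuous hT
  refine Measure.ext_of_integral_eq_on_compactlySupported fun f => ?_
  rw [integral_map hT.aemeasurable (map_continuous f).aestronglyMeasurable, h]

end Measure

lemma continuousOn_extend_subtype_val {α β : Type*} [TopologicalSpace α] [TopologicalSpace β]
    {s : Set α} {g : s → β} (hg : Continuous g) (e : α → β) :
    ContinuousOn (Function.extend Subtype.val g e) s := by
  rw [continuousOn_iff_continuous_domRestrict]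
  convert hg
  funext x
  exact Subtype.val_injective.extend_apply g e x

lemma weakTop_t2Space (𝕜 E : Type*) [NontriviallyNormedField 𝕜] [NormedAddCommGroup E]
    [NormedSpace 𝕜 E] [SeparatingDual 𝕜 E] : @T2Space E (weakTop 𝕜 E) := by
  have hcont : @Continuous E _ (weakTop 𝕜 E) _ fun x (φ : E →L[𝕜] 𝕜) => φ x :=
    @continuous_pi _ _ _ (weakTop 𝕜 E) _ _ fun φ => continuous_iInf_dom continuous_induced_dom
  exact @T2Space.of_injective_continuous _ _ (weakTop 𝕜 E) _ _ _
    (fun x x' h => SeparatingDual.eq_iff_forall_dual_eq.mpr (congrFun h)) hcont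

theorem IsLIM.exists_invariant_regular_probabilityMeasure {S : Type*} [Semigroup S]
    {X : Set (S → ℂ)} {m : (S → ℂ) → ℂ} (hX : IsTransInvSubspace X) (hm : IsLIM X m)
    {Y : Type*} [TopologicalSpace Y] [CompactSpace Y] [T2Space Y] [MeasurableSpace Y]
    [BorelSpace Y] (o : S → Y) (ho : ∀ g : C_c(Y, ℝ), (fun s => (g (o s) : ℂ)) ∈ X)
    (T : S → C(Y, Y)) (hTo : ∀ s t, T s (o t) = o (s * t)) :
    ∃ μ : Measure Y, IsProbabilityMeasure μ ∧ μ.Regular ∧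
      ∀ s, MeasurePreserving (T s) μ μ := by
  let Λ := hm.orbitFunctional hX o ho
  refine ⟨RealRMK.rieszMeasure Λ, ⟨?_⟩, inferInstance, fun s => ⟨(T s).measurable, ?_⟩⟩
  · rw [RealRMK.rieszMeasure_univ, hm.orbitFunctional_one, ENNReal.ofReal_one]
  refine Measure.map_eq_of_integral_comp_eq (T s).continuous fun g => ?_
  rw [RealRMK.integral_rieszMeasure, ← hm.orbitFunctional_comp hX o ho (hTo s) g,
    ← RealRMK.integral_rieszMeasure]
  rfl

theorem exists_invariant_radon_probability_measure_general (S : Type*) [Semigroup S]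
    [TopologicalSpace S]
    (X : Set (S → ℂ)) (hX : IsTransInvSubspace X) (hLIM : HasLIM X)
    (E : Type*) [NormedAddCommGroup E] [NormedSpace ℝ E]
    (K : Set E) (act : S → E → E)
    (hcomp : @IsCompact E (weakTop ℝ E) K)
    (hact : IsActionOn act K) (hsc : WeaklySepContOn act K)
    (y : K) (hy : ∀ f : E → ℂ, @ContinuousOn E ℂ (weakTop ℝ E) _ f K →
      (fun s : S => f (act s y)) ∈ X) :
    ∃ μ : @MeasureTheory.Measure ↥K (@borel ↥K (weakSubTop E K)),
      μ Set.univ = 1 ∧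
      (∀ A : Set ↥K, @MeasurableSet ↥K (@borel ↥K (weakSubTop E K)) A →
        μ A = ⨆ (C : Set ↥K) (_ : C ⊆ A ∧ @IsCompact ↥K (weakSubTop E K) C), μ C) ∧
      ∀ s : S, ∀ A : Set ↥K, @MeasurableSet ↥K (@borel ↥K (weakSubTop E K)) A →
        μ (Set.MapsTo.restrict (act s) K K (hact.1 s) ⁻¹' A) = μ A := by
  obtain ⟨m, hm⟩ := hLIM
  have : @T2Space E (weakTop ℝ E) := weakTop_t2Space ℝ E
  let : TopologicalSpace E := weakTop ℝ E
  -- `weakSubTop` is not reducible, so instances on the subtype are carried over by hand.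
  have hK2 : T2Space K := inferInstance
  let : TopologicalSpace K := weakSubTop E K
  have : T2Space K := hK2
  let : MeasurableSpace K := borel K
  have : BorelSpace K := ⟨rfl⟩
  have : CompactSpace K := isCompact_iff_compactSpace.mp hcomp
  let o : S → K := fun s => ⟨act s y, hact.1 s y.2⟩
  have ho (g : C_c(K, ℝ)) : (fun s => (g (o s) : ℂ)) ∈ X := by
    convert hy _ (continuousOn_extend_subtype_val (Complex.continuous_ofReal.comp g.continuous) 0)
      with s
    exact (Subtype.val_injective.extend_apply (Complex.ofReal ∘ g) 0 (o s)).symm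
  let T (s : S) : C(K, K) := ⟨(hact.1 s).restrict, (hsc.1 s).mapsToRestrict (hact.1 s)⟩
  obtain ⟨μ, hμ1, hμreg, hμT⟩ := hm.exists_invariant_regular_probabilityMeasure hX o ho T
    fun s t => Subtype.ext (hact.2 s t y y.2)
  refine ⟨μ, measure_univ, fun A hA => ?_,
    fun s A hA => (hμT s).measure_preimage hA.nullMeasurableSet⟩
  simp_rw [iSup_and]
  exact hA.measure_eq_iSup_isCompact μ

/-- under the hypotheses of Lemma `Lem`, there exists a probability
Radon measure `μ` on `K` (with the weak topology) which is invariant under the action: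
`μ (s⁻¹ A) = μ A` for every Borel set `A ⊆ K` and every `s ∈ S`, where
`s⁻¹A = {x ∈ K : s • x ∈ A}` is the preimage of `A` under the restricted action map. -/
theorem exists_invariant_radon_probability_measure (S : Type*) [Semigroup S]
    [TopologicalSpace S] [T2Space S] [SemitopoSemigroup S]
    (X : Set (S → ℂ)) (hX : IsTransInvSubspace X) (hLIM : HasLIM X)
    (E : Type*) [NormedAddCommGroup E] [NormedSpace ℝ E] [CompleteSpace E]
    (K : Set E) (act : S → E → E)
    (hne : K.Nonempty) (hcomp : @IsCompact E (weakTop ℝ E) K)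
    (hact : IsActionOn act K) (hsc : WeaklySepContOn act K)
    (y : K) (hy : ∀ f : E → ℂ, @ContinuousOn E ℂ (weakTop ℝ E) _ f K →
      (fun s : S => f (act s y)) ∈ X) :
    ∃ μ : @MeasureTheory.Measure ↥K (@borel ↥K (weakSubTop E K)),
      μ Set.univ = 1 ∧
      (∀ A : Set ↥K, @MeasurableSet ↥K (@borel ↥K (weakSubTop E K)) A →
        μ A = ⨆ (C : Set ↥K) (_ : C ⊆ A ∧ @IsCompact ↥K (weakSubTop E K) C), μ C) ∧
      ∀ s : S, ∀ A : Set ↥K, @MeasurableSet ↥K (@borel ↥K (weakSubTop E K)) A →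
        μ (Set.MapsTo.restrict (act s) K K (hact.1 s) ⁻¹' A) = μ A :=
  exists_invariant_radon_probability_measure_general S X hX hLIM E K act hcomp hact hsc y hy
end

section
/- Let S be a semitopological semigroup with an identity element, let f ∈ AP(S), and let K_f denote the closure in the norm topology of C(S) of the convex hull of {r_s f : s ∈ S}. Then K_f is norm-compact, r_s(K_f) ⊆ K_f for every s ∈ S, and the map S × K_f → K_f, (s,g) ↦ r_s g, defines a left action of S on K_f which is nonexpansive, weakly separately continuous, and weakly equicontinuous (the family {g ↦ r_s g : s ∈ S} is equicontinuous with respect to the weak topology of C(S) restricted to K_f). -/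
open scoped BoundedContinuousFunction

/-! The right orbit of an almost periodic `f` is totally bounded: if `G₁, …, Gₙ` is an `ε`-net
of the left orbit, then `‖r_s f - r_{s'} f‖ ≤ 3ε` as soon as `|Gᵢ s - Gᵢ s'| ≤ ε` for all `i`,
and these finitely many numbers range in a bounded subset of `ℂⁿ`. Hence `K_f` is compact, and on
`K_f` every coarser Hausdorff topology (the weak topology, or pointwise convergence) coincides with
the norm topology. The weak statements thus reduce to norm ones: `r_s` is a linear contraction,
and `s ↦ r_s g` is pointwise continuous. -/

open BoundedContinuousFunction Filter Set Metric

section Transpose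

variable {X Y E : Type*} [TopologicalSpace X] [TopologicalSpace Y] [MetricSpace E]

lemma dist_transpose_le_three_mul {f : X → Y →ᵇ E} {g : Y → X →ᵇ E} (hfg : ∀ x y, f x y = g y x)
    {T : Set (Y →ᵇ E)} {δ : ℝ} (hδ : 0 ≤ δ) (hT : ∀ x, ∃ G ∈ T, dist (f x) G ≤ δ) {y y' : Y}
    (hyy' : ∀ G ∈ T, dist (G y) (G y') ≤ δ) :
    dist (g y) (g y') ≤ 3 * δ := by
  refine (dist_le (by positivity)).2 fun x => ?_
  obtain ⟨G, hG, hxG⟩ := hT x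
  rw [← hfg, ← hfg]
  calc dist (f x y) (f x y')
      ≤ dist (f x y) (G y) + dist (G y) (G y') + dist (G y') (f x y') := dist_triangle4 _ _ _ _
    _ ≤ δ + δ + δ := by
      gcongr
      · exact (dist_coe_le_dist y).trans hxG
      · exact hyy' G hG
      · exact (dist_coe_le_dist y').trans (dist_comm (f x) G ▸ hxG)
    _ = 3 * δ := by ring

theorem totallyBounded_range_of_transpose [ProperSpace E] {f : X → Y →ᵇ E} {g : Y → X →ᵇ E}
    (hfg : ∀ x y, f x y = g y x) (hf : TotallyBounded (range f)) :
    TotallyBounded (range g) := by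
  rw [Metric.totallyBounded_iff]
  intro ε hε
  obtain ⟨T, hTfin, hTcov⟩ := Metric.totallyBounded_iff.1 hf (ε / 4) (by positivity)
  have : Fintype T := hTfin.fintype
  let Ψ : Y → T → E := fun y G => (G : Y →ᵇ E) y
  have hΨ : TotallyBounded (range Ψ) := by
    have hb : Bornology.IsBounded (range Ψ) :=
      (Bornology.IsBounded.pi fun G : T => (G : Y →ᵇ E).isBounded_range).subset <| by
        rintro _ ⟨y, rfl⟩ G -
        exact mem_range_self y
    exact hb.isCompact_closure.totallyBounded.subset subset_closure
  obtain ⟨N, hNsub, hNfin, hNcov⟩ := finite_approx_of_totallyBounded hΨ (ε / 4) (by positivity)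
  obtain ⟨M, -, hMfin, rfl⟩ :=
    exists_subset_image_finite_and.1 ⟨N, image_univ (f := Ψ) ▸ hNsub, hNfin, rfl⟩
  refine ⟨g '' M, hMfin.image g, ?_⟩
  rintro _ ⟨y, rfl⟩
  obtain ⟨_, ⟨y', hy', rfl⟩, hyy'⟩ := mem_iUnion₂.1 (hNcov (mem_range_self y))
  refine mem_iUnion₂.2 ⟨g y', mem_image_of_mem g hy', ?_⟩
  have hnear : ∀ x, ∃ G ∈ T, dist (f x) G ≤ ε / 4 := fun x => by
    obtain ⟨G, hG, hxG⟩ := mem_iUnion₂.1 (hTcov (mem_range_self x))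
    exact ⟨G, hG, (mem_ball.1 hxG).le⟩
  have hfinger : ∀ G ∈ T, dist (G y) (G y') ≤ ε / 4 := fun G hG =>
    (dist_le_pi_dist (Ψ y) (Ψ y') ⟨G, hG⟩).trans (mem_ball.1 hyy').le
  rw [mem_ball]
  linarith [dist_transpose_le_three_mul hfg (by positivity) hnear hfinger]

end Transpose

section CompactTopologies

variable {E : Type*} {t₁ t₂ : TopologicalSpace E}

lemma nhdsWithin_eq_of_isCompact_of_le (hle : t₁ ≤ t₂) (ht₂ : @T2Space E t₂) {K : Set E}
    (hK : @IsCompact E t₁ K) (x : E) :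
    @nhdsWithin E t₂ x K = @nhdsWithin E t₁ x K := by
  refine le_antisymm (fun s hs => ?_) (inf_le_inf_right _ (@nhds_mono E t₁ t₂ x hle))
  obtain ⟨U, hUopen, hxU, hUK⟩ := (@mem_nhdsWithin E t₁ _ _ _).1 hs
  -- `K \ U` is `t₁`-compact, hence `t₂`-compact, hence `t₂`-closed
  have hC : @IsCompact E t₂ (K \ U) := by
    simpa using @IsCompact.image E E t₁ t₂ _ id (@IsCompact.diff E t₁ K U hK hUopen)
      (@continuous_id_of_le E t₁ t₂ hle)
  refine (@mem_nhdsWithin E t₂ _ _ _).2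
    ⟨(K \ U)ᶜ, @IsClosed.isOpen_compl E t₂ _ (@IsCompact.isClosed E t₂ ht₂ _ hC),
      fun h => h.2 hxU, fun y hy => hUK ⟨by_contra fun hyU => hy.1 ⟨hy.2, hyU⟩, hy.2⟩⟩

lemma continuous_of_isCompact_of_le {Z : Type*} [TopologicalSpace Z] (hle : t₁ ≤ t₂)
    (ht₂ : @T2Space E t₂) {K : Set E} (hK : @IsCompact E t₁ K) {φ : Z → E} (hφK : ∀ z, φ z ∈ K)
    (hφ : @Continuous Z E _ t₂ φ) : @Continuous Z E _ t₁ φ := by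
  refine @continuous_iff_continuousAt Z E _ t₁ φ |>.2 fun z => ?_
  have h := @tendsto_nhdsWithin_of_tendsto_nhds_of_eventually_within E Z t₂ _ _ K _
    (@Continuous.tendsto Z E _ t₂ φ hφ z) (Eventually.of_forall hφK)
  rw [nhdsWithin_eq_of_isCompact_of_le hle ht₂ hK] at h
  exact h.mono_right (@nhdsWithin_le_nhds E t₁ _ _)

end CompactTopologies

section WeakTopology

lemma le_weakTop (𝕜 E : Type*) [NontriviallyNormedField 𝕜] [NormedAddCommGroup E]
    [NormedSpace 𝕜 E] : (inferInstance : TopologicalSpace E) ≤ weakTop 𝕜 E :=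
  le_iInf fun φ => continuous_iff_le_induced.1 φ.continuous

variable {E : Type*} [NormedAddCommGroup E] [NormedSpace ℂ E] {K : Set E}

lemma continuousOn_weakTop_of_isCompact (hT2 : @T2Space E (weakTop ℂ E)) (hK : IsCompact K)
    {T : E → E} (hT : Continuous T) :
    @ContinuousOn E E (weakTop ℂ E) (weakTop ℂ E) T K := fun x _ => by
  change Tendsto T (@nhdsWithin E (weakTop ℂ E) x K) (@nhds E (weakTop ℂ E) (T x))
  rw [nhdsWithin_eq_of_isCompact_of_le (le_weakTop ℂ E) hT2 hK]
  exact hT.continuousWithinAt.mono_right (_root_.nhds_mono (le_weakTop ℂ E))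

lemma exists_mem_nhdsWithin_weakTop_of_nonexpansive {ι : Type*} (hT2 : @T2Space E (weakTop ℂ E))
    (hK : IsCompact K) {T : ι → E → E} (hT : ∀ i x y, ‖T i x - T i y‖ ≤ ‖x - y‖) (x : E)
    {W : Set E} (hW : W ∈ @nhds E (weakTop ℂ E) 0) :
    ∃ U ∈ @nhdsWithin E (weakTop ℂ E) x K, ∀ y ∈ U, ∀ i, T i y - T i x ∈ W := by
  have hle : nhds (0 : E) ≤ @nhds E (weakTop ℂ E) 0 := _root_.nhds_mono (le_weakTop ℂ E)
  obtain ⟨ε, hε, hball⟩ := Metric.mem_nhds_iff.1 (hle hW)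
  refine ⟨ball x ε, ?_, fun y hy i => hball ?_⟩
  · rw [nhdsWithin_eq_of_isCompact_of_le (le_weakTop ℂ E) hT2 hK]
    exact mem_nhdsWithin_of_mem_nhds (ball_mem_nhds x hε)
  · rw [mem_ball_zero_iff]
    exact (hT i y x).trans_lt (mem_ball_iff_norm.1 hy)

noncomputable def pointwiseTop (X : Type*) [TopologicalSpace X] : TopologicalSpace (X →ᵇ ℂ) :=
  TopologicalSpace.induced (fun F : X →ᵇ ℂ => (F : X → ℂ)) Pi.topologicalSpace

variable {X : Type*} [TopologicalSpace X]

lemma t2Space_pointwiseTop : @T2Space (X →ᵇ ℂ) (pointwiseTop X) :=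
  @T2Space.of_injective_continuous _ _ (pointwiseTop X) _ _ _ DFunLike.coe_injective
    continuous_induced_dom

lemma weakTop_le_pointwiseTop : weakTop ℂ (X →ᵇ ℂ) ≤ pointwiseTop X := by
  rw [pointwiseTop, Pi.topologicalSpace, induced_iInf]
  refine le_iInf fun t => ?_
  rw [induced_compose]
  exact iInf_le _ (evalCLM ℂ t)

lemma t2Space_weakTop : @T2Space (X →ᵇ ℂ) (weakTop ℂ (X →ᵇ ℂ)) :=
  @t2Space_antitone _ (weakTop ℂ (X →ᵇ ℂ)) (pointwiseTop X) weakTop_le_pointwiseTop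
    t2Space_pointwiseTop

end WeakTopology

lemma Set.MapsTo.closure_convexHull {E F : Type*} [AddCommGroup E] [Module ℝ E] [TopologicalSpace E]
    [AddCommGroup F] [Module ℝ F] [TopologicalSpace F] (f : E →L[ℝ] F) {A : Set E} {B : Set F}
    (h : MapsTo f A B) : MapsTo f (closure (convexHull ℝ A)) (closure (convexHull ℝ B)) := by
  refine MapsTo.closure ?_ f.continuous
  rw [mapsTo_iff_image_subset, ← ContinuousLinearMap.coe_coe, LinearMap.image_convexHull]
  exact convexHull_mono h.image_subset

section Translation

variable {S : Type*} [Semigroup S] [TopologicalSpace S] [SemitopoSemigroup S]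

lemma rTransB_rTransB (s s' : S) (g : S →ᵇ ℂ) : rTransB s' (rTransB s g) = rTransB (s' * s) g := by
  ext t
  exact congrArg g (mul_assoc t s' s)

lemma rTransB_eq_compContinuousCLM (𝕜 : Type*) [NormedField 𝕜] [NormedSpace 𝕜 ℂ] (s : S) :
    rTransB s = compContinuousCLM ℂ 𝕜 ⟨fun t => t * s, SemitopoSemigroup.cont_right s⟩ :=
  rfl

lemma norm_rTransB_sub_le (s : S) (g h : S →ᵇ ℂ) : ‖rTransB s g - rTransB s h‖ ≤ ‖g - h‖ := by
  rw [rTransB_eq_compContinuousCLM ℂ, ← map_sub]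
  exact norm_compContinuous_le _ _

lemma continuous_rTransB (s : S) : Continuous (rTransB s : (S →ᵇ ℂ) → S →ᵇ ℂ) := by
  rw [rTransB_eq_compContinuousCLM ℂ]
  exact ContinuousLinearMap.continuous _

lemma continuous_rTransB_pointwiseTop (g : S →ᵇ ℂ) :
    @Continuous S _ _ (pointwiseTop S) fun s => rTransB s g :=
  continuous_induced_rng.2 <| continuous_pi fun t =>
    g.continuous.comp (SemitopoSemigroup.cont_left t)

lemma IsAPb.totallyBounded_range_rTransB {F : S →ᵇ ℂ} (hF : IsAPb F) :
    TotallyBounded (range fun s => rTransB s F) :=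
  totallyBounded_range_of_transpose (f := fun t => lTransB t F) (fun _ _ => rfl)
    (hF.totallyBounded.subset subset_closure)

end Translation

theorem ap_right_orbit_action_properties_general (S : Type*) [Monoid S] [TopologicalSpace S]
    [SemitopoSemigroup S] (F : S →ᵇ ℂ) (hF : IsAPb F)
    (Kf : Set (S →ᵇ ℂ))
    (hKf : Kf = closure (convexHull ℝ (Set.range fun s : S => rTransB s F))) :
    -- `K_f` is norm-compact
    IsCompact Kf ∧
    -- `K_f` is invariant under every right translation
    (∀ s : S, rTransB s '' Kf ⊆ Kf) ∧
    -- `(s, g) ↦ r_s g` is a left action: `r_{s'} (r_s g) = r_{s' s} g`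
    (∀ s s' : S, ∀ g ∈ Kf, rTransB s' (rTransB s g) = rTransB (s' * s) g) ∧
    -- the action is nonexpansive
    (∀ s : S, ∀ g ∈ Kf, ∀ h ∈ Kf, ‖rTransB s g - rTransB s h‖ ≤ ‖g - h‖) ∧
    -- for each `s`, the map `g ↦ r_s g` is weakly continuous on `K_f`
    (∀ s : S, @ContinuousOn _ _ (weakTop ℂ (S →ᵇ ℂ)) (weakTop ℂ (S →ᵇ ℂ)) (rTransB s) Kf) ∧
    -- for each `g ∈ K_f`, the map `s ↦ r_s g` is continuous into the weak topology
    (∀ g ∈ Kf, @Continuous S _ _ (weakTop ℂ (S →ᵇ ℂ)) fun s : S => rTransB s g) ∧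
    -- the family `{g ↦ r_s g : s ∈ S}` is weakly equicontinuous on `K_f`
    (∀ g ∈ Kf, ∀ W ∈ @nhds _ (weakTop ℂ (S →ᵇ ℂ)) (0 : S →ᵇ ℂ),
      ∃ U ∈ @nhdsWithin _ (weakTop ℂ (S →ᵇ ℂ)) g Kf,
        ∀ h ∈ U, ∀ s : S, rTransB s h - rTransB s g ∈ W) := by
  have hK : IsCompact Kf := hKf ▸
    hF.totallyBounded_range_rTransB.convexHull.closure.isCompact_of_isClosed isClosed_closure
  have hmaps (s : S) : MapsTo (rTransB s) Kf Kf := by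
    have horbit : MapsTo (rTransB s) (range fun u => rTransB u F) (range fun u => rTransB u F) := by
      rintro _ ⟨u, rfl⟩
      exact ⟨s * u, (rTransB_rTransB u s F).symm⟩
    rw [hKf, rTransB_eq_compContinuousCLM ℝ]
    exact horbit.closure_convexHull _
  refine ⟨hK, fun s => (hmaps s).image_subset, fun s s' g _ => rTransB_rTransB s s' g,
    fun s g _ h _ => norm_rTransB_sub_le s g h,
    fun s => continuousOn_weakTop_of_isCompact t2Space_weakTop hK (continuous_rTransB s),
    fun g hg => ?_,
    fun g _ W hW =>
      exists_mem_nhdsWithin_weakTop_of_nonexpansive t2Space_weakTop hK norm_rTransB_sub_le g hW⟩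
  -- the orbit map is pointwise continuous into the compact set `Kf`, hence norm continuous
  refine continuous_le_rng (le_weakTop ℂ _) ?_
  exact continuous_of_isCompact_of_le ((le_weakTop ℂ _).trans weakTop_le_pointwiseTop)
    t2Space_pointwiseTop hK (fun s => hmaps s hg) (continuous_rTransB_pointwiseTop g)

/-- for a semitopological semigroup `S` with identity and `f ∈ AP(S)`,
the set `K_f`, the norm closure in `C(S)` of the convex hull of the right orbit
`{r_s f : s ∈ S}`, is norm-compact and invariant under right translations, and
`(s, g) ↦ r_s g` defines a left action of `S` on `K_f` which is nonexpansive, weakly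
separately continuous, and weakly equicontinuous. -/
theorem ap_right_orbit_action_properties (S : Type*) [Monoid S] [TopologicalSpace S]
    [T2Space S] [SemitopoSemigroup S] (F : S →ᵇ ℂ) (hF : IsAPb F)
    (Kf : Set (S →ᵇ ℂ))
    (hKf : Kf = closure (convexHull ℝ (Set.range fun s : S => rTransB s F))) :
    -- `K_f` is norm-compact
    IsCompact Kf ∧
    -- `K_f` is invariant under every right translation
    (∀ s : S, rTransB s '' Kf ⊆ Kf) ∧
    -- `(s, g) ↦ r_s g` is a left action: `r_{s'} (r_s g) = r_{s' s} g`
    (∀ s s' : S, ∀ g ∈ Kf, rTransB s' (rTransB s g) = rTransB (s' * s) g) ∧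
    -- the action is nonexpansive
    (∀ s : S, ∀ g ∈ Kf, ∀ h ∈ Kf, ‖rTransB s g - rTransB s h‖ ≤ ‖g - h‖) ∧
    -- for each `s`, the map `g ↦ r_s g` is weakly continuous on `K_f`
    (∀ s : S, @ContinuousOn _ _ (weakTop ℂ (S →ᵇ ℂ)) (weakTop ℂ (S →ᵇ ℂ)) (rTransB s) Kf) ∧
    -- for each `g ∈ K_f`, the map `s ↦ r_s g` is continuous into the weak topology
    (∀ g ∈ Kf, @Continuous S _ _ (weakTop ℂ (S →ᵇ ℂ)) fun s : S => rTransB s g) ∧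
    -- the family `{g ↦ r_s g : s ∈ S}` is weakly equicontinuous on `K_f`
    (∀ g ∈ Kf, ∀ W ∈ @nhds _ (weakTop ℂ (S →ᵇ ℂ)) (0 : S →ᵇ ℂ),
      ∃ U ∈ @nhdsWithin _ (weakTop ℂ (S →ᵇ ℂ)) g Kf,
        ∀ h ∈ U, ∀ s : S, rTransB s h - rTransB s g ∈ W) :=
  ap_right_orbit_action_properties_general S F hF Kf hKf
end
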